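/- arXiv:2509.06648 — 4 statements merged into one kernel-verified Lean document; each statement's English description precedes it below -/
import Mathlib

section
/- As N → ∞, R_{N,s}/log N converges to 1/(γ(s)·s) uniformly in s ∈ 𝕊: for every ε > 0 there exists N₀ such that for all integers N ≥ N₀ and all s ∈ 𝕊, |R_{N,s}/log N − 1/(γ(s)·s)| ≤ ε. -/
/-! Along the ray through `s`, `f (t • s)` is within a factor `3/2` of
`c s · t^{-1/2} · e^{-t g(s)}`, where `g s = γ s · s`, uniformly in `s` once `t` is large.
By compactness of the sphere, `c` and `g` lie between positive constants. At
`t = (1/g(s) + ε) log N` the profile is below `β/N` by a factor `N^{-ε g(s)}`, while at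
`t = (1/g(s) - ε) log N` it exceeds `β/N`, because `N^{ε g(s)}` beats `√(log N)`; the
thresholds on `N` depend only on the constants, which gives uniformity in `s`. -/

open Filter Topology

/-- ℓ¹ dot product on `ℝ^d` (with the `ℓ¹` norm, modelled by `PiLp 1`). -/
noncomputable def dotp {d : ℕ} (x y : PiLp 1 (fun _ : Fin d => ℝ)) : ℝ :=
  ∑ j, x j * y j

open Real Set

noncomputable def radialProfile (a g t : ℝ) : ℝ :=
  a / (√t * exp (t * g))

theorem IsCompact.exists_pos_forall_ge {X : Type*} [TopologicalSpace X] {K : Set X} {g : X → ℝ}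
    (hK : IsCompact K) (hg : ContinuousOn g K) : ∃ M > 0, ∀ x ∈ K, g x ≤ M := by
  obtain ⟨M, hM⟩ := hK.bddAbove_image hg
  exact ⟨max M 1, by positivity, fun x hx => (hM ⟨x, hx, rfl⟩).trans (le_max_left _ _)⟩

theorem abs_sSup_div_sub_le {S : Set ℝ} {L m ε : ℝ} (hL : 0 < L) (hlow : (m - ε) * L ∈ S)
    (hup : ∀ t ∈ S, t ≤ (m + ε) * L) : |sSup S / L - m| ≤ ε := by
  have hle := (le_div_iff₀ hL).2 (le_csSup ⟨_, hup⟩ hlow)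
  have hge := (div_le_iff₀ hL).2 (csSup_le ⟨_, hlow⟩ hup)
  rw [abs_le]
  constructor <;> linarith

theorem half_le_and_le_three_halves_of_abs_div_sub_one_le {u P : ℝ} (hP : 0 < P)
    (h : |u / P - 1| ≤ 1 / 2) : P / 2 ≤ u ∧ u ≤ 3 / 2 * P := by
  rw [abs_le, le_sub_iff_add_le, sub_le_iff_le_add, le_div_iff₀ hP, div_le_iff₀ hP] at h
  constructor <;> linarith [h.1, h.2]

theorem three_halves_radialProfile_lt {a g t L ε β cmax gmin : ℝ} (hgmin : 0 < gmin)
    (hg : gmin ≤ g) (ha : 0 ≤ a) (hac : a ≤ cmax) (hε : 0 ≤ ε) (hL : 0 ≤ L) (ht1 : 1 ≤ t)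
    (ht : (1 / g + ε) * L ≤ t) (hlarge : 3 / 2 * cmax < β * exp (ε * gmin * L)) :
    3 / 2 * radialProfile a g t < β / exp L := by
  have hg0 : 0 < g := hgmin.trans_le hg
  have hexp : exp L * exp (ε * gmin * L) ≤ √t * exp (t * g) := by
    rw [← exp_add]
    have hexponent : L + ε * gmin * L ≤ t * g :=
      calc L + ε * gmin * L ≤ L + ε * g * L := by gcongr
        _ = (1 / g + ε) * L * g := by field_simp
        _ ≤ t * g := by gcongr
    calc exp (L + ε * gmin * L) ≤ exp (t * g) := exp_le_exp.2 hexponent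
      _ ≤ √t * exp (t * g) := le_mul_of_one_le_left (exp_pos _).le (one_le_sqrt.2 ht1)
  calc 3 / 2 * radialProfile a g t ≤ 3 / 2 * (cmax / (exp L * exp (ε * gmin * L))) := by
        unfold radialProfile
        gcongr 3 / 2 * ?_
        exact div_le_div₀ (ha.trans hac) hac (by positivity) hexp
    _ = 3 / 2 * cmax / exp (ε * gmin * L) / exp L := by ring
    _ < β / exp L := by
        gcongr
        rwa [div_lt_iff₀ (exp_pos _)]

theorem div_exp_le_radialProfile {a g L ε β cmin gmin : ℝ} (hgmin : 0 < gmin) (hg : gmin ≤ g)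
    (hcmin : 0 ≤ cmin) (hca : cmin ≤ a) (hε : 0 ≤ ε) (hL : 0 < L) (ht₀ : 0 < (1 / g - ε) * L)
    (hlarge : β * √(L / gmin) ≤ cmin / 2 * exp (ε * gmin * L)) :
    β / exp L ≤ radialProfile a g ((1 / g - ε) * L) / 2 := by
  have hg0 : 0 < g := hgmin.trans_le hg
  set t₀ := (1 / g - ε) * L
  have hsqrt : √t₀ ≤ √(L / gmin) := by
    gcongr
    calc t₀ ≤ 1 / gmin * L := by
          gcongr (?_ : ℝ) * L; linarith [one_div_le_one_div_of_le hgmin hg]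
      _ = L / gmin := by ring
  have hexponent : t₀ * g ≤ L - ε * gmin * L :=
    calc t₀ * g = L - ε * g * L := by simp only [t₀]; field_simp
      _ ≤ L - ε * gmin * L := by gcongr
  have hsqrt_pos : 0 < √(L / gmin) := by positivity
  calc β / exp L = β * √(L / gmin) / (√(L / gmin) * exp L) := by field_simp
    _ ≤ cmin / 2 * exp (ε * gmin * L) / (√(L / gmin) * exp L) := by gcongr
    _ = cmin / 2 / (√(L / gmin) * exp (L - ε * gmin * L)) := by rw [exp_sub]; field_simp
    _ ≤ a / 2 / (√t₀ * exp (t₀ * g)) := by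
        have : 0 < √t₀ * exp (t₀ * g) := mul_pos (sqrt_pos.2 ht₀) (exp_pos _)
        gcongr
        linarith
    _ = radialProfile a g t₀ / 2 := by unfold radialProfile; ring

theorem eventually_sqrt_le_mul_exp {β b κ δ : ℝ} (hb : 0 < b) (hκ : 0 < κ) (hδ : 0 < δ) :
    ∀ᶠ L in atTop, β * √(L / b) ≤ κ * exp (δ * L) := by
  have hsmall := ((isLittleO_rpow_exp_pos_mul_atTop (1 / 2) hδ).const_mul_left (β / √b)).def hκ
  filter_upwards [hsmall, eventually_ge_atTop 0] with L hL hL0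
  rw [Real.norm_of_nonneg (exp_pos _).le, ← sqrt_eq_rpow] at hL
  calc β * √(L / b) = β / √b * √L := by rw [sqrt_div' _ hb.le]; ring
    _ ≤ ‖β / √b * √L‖ := le_norm_self _
    _ ≤ κ * exp (δ * L) := hL

theorem eventually_abs_sSup_superlevel_div_log_sub_le {cmin cmax gmin gmax B β ε : ℝ}
    (hcmin : 0 < cmin) (hgmin : 0 < gmin) (hgmax : 0 < gmax) (hβ : 0 < β) (hε : 0 < ε)
    (hεg : ε ≤ 1 / (2 * gmax)) :
    ∀ᶠ x : ℝ in atTop, ∀ (φ : ℝ → ℝ) (a g : ℝ), a ∈ Icc cmin cmax → g ∈ Icc gmin gmax →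
      (∀ t > B, radialProfile a g t / 2 ≤ φ t ∧ φ t ≤ 3 / 2 * radialProfile a g t) →
        |sSup {t | 0 < t ∧ β / x ≤ φ t} / log x - 1 / g| ≤ ε := by
  have hδ : 0 < ε * gmin := mul_pos hε hgmin
  have hlarge : ∀ᶠ L in atTop, max B 1 < L / (2 * gmax) ∧
      3 / 2 * cmax < β * exp (ε * gmin * L) ∧ β * √(L / gmin) ≤ cmin / 2 * exp (ε * gmin * L) := by
    refine ((tendsto_id.atTop_div_const (by positivity)).eventually_gt_atTop _).and
      (.and ?_ (eventually_sqrt_le_mul_exp hgmin (half_pos hcmin) hδ))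
    exact ((tendsto_exp_atTop.comp (tendsto_id.const_mul_atTop hδ)).const_mul_atTop
      hβ).eventually_gt_atTop _
  filter_upwards [tendsto_log_atTop.eventually hlarge, eventually_gt_atTop 0]
    with x ⟨hB, hupper, hlower⟩ hx φ a g ⟨hca, hac⟩ ⟨hgg, hgg'⟩ hφ
  set L := log x
  have hxL : x = exp L := (exp_log hx).symm
  have hL : 0 < L := (div_pos_iff_of_pos_right (by positivity : (0 : ℝ) < 2 * gmax)).1
    ((zero_lt_one.trans_le (le_max_right B 1)).trans hB)
  have hg0 : 0 < g := hgmin.trans_le hgg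
  have hslope : 1 / (2 * gmax) * L ≤ (1 / g - ε) * L := by
    gcongr
    have : 1 / gmax ≤ 1 / g := one_div_le_one_div_of_le hg0 hgg'
    have : 1 / (2 * gmax) = 1 / gmax / 2 := by ring
    linarith
  have hthreshold : max B 1 < (1 / g - ε) * L := by
    calc max B 1 < L / (2 * gmax) := hB
      _ = 1 / (2 * gmax) * L := by ring
      _ ≤ _ := hslope
  have ht₀ : 0 < (1 / g - ε) * L := (zero_lt_one.trans_le (le_max_right B 1)).trans hthreshold
  apply abs_sSup_div_sub_le hL
  · refine ⟨ht₀, ?_⟩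
    rw [hxL]
    exact (div_exp_le_radialProfile hgmin hgg hcmin.le hca hε.le hL ht₀ hlower).trans
      (hφ _ ((le_max_left _ _).trans_lt hthreshold)).1
  · rintro t ⟨-, ht⟩
    by_contra! hlt
    have hwidth : (1 / g - ε) * L ≤ (1 / g + ε) * L := by gcongr; linarith
    have htB : max B 1 < t := by linarith
    have := three_halves_radialProfile_lt hgmin hgg (hcmin.le.trans hca) hac hε.le hL.le
      ((le_max_right _ _).trans htB.le) hlt.le hupper
    rw [← hxL] at this
    linarith [(hφ t ((le_max_left _ _).trans_lt htB)).2]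

section

variable {d : ℕ}

theorem dotp_comm (x y : PiLp 1 (fun _ : Fin d => ℝ)) : dotp x y = dotp y x := by
  simp only [dotp, mul_comm]

theorem dotp_smul_left (t : ℝ) (x y : PiLp 1 (fun _ : Fin d => ℝ)) :
    dotp (t • x) y = t * dotp x y := by
  simp only [dotp, PiLp.smul_apply, smul_eq_mul, Finset.mul_sum, mul_assoc]

theorem ContinuousOn.dotp {X : Type*} [TopologicalSpace X] {K : Set X}
    {u v : X → PiLp 1 (fun _ : Fin d => ℝ)} (hu : ContinuousOn u K) (hv : ContinuousOn v K) :
    ContinuousOn (fun x => _root_.dotp (u x) (v x)) K := by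
  unfold _root_.dotp
  fun_prop

theorem exists_forall_radialProfile_bounds {c : PiLp 1 (fun _ : Fin d => ℝ) → ℝ}
    {γ : PiLp 1 (fun _ : Fin d => ℝ) → PiLp 1 (fun _ : Fin d => ℝ)}
    {f : PiLp 1 (fun _ : Fin d => ℝ) → ℝ}
    (hcpos : ∀ s : PiLp 1 (fun _ : Fin d => ℝ), ‖s‖ = 1 → 0 < c s)
    (hf : ∀ ε > (0 : ℝ), ∃ R > (0 : ℝ), ∀ z : PiLp 1 (fun _ : Fin d => ℝ), ‖z‖ > R →
      |f z * (c (‖z‖⁻¹ • z))⁻¹ * √‖z‖ * exp (dotp z (γ (‖z‖⁻¹ • z))) - 1| ≤ ε) :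
    ∃ R, ∀ s : PiLp 1 (fun _ : Fin d => ℝ), ‖s‖ = 1 → ∀ t > R,
      radialProfile (c s) (dotp (γ s) s) t / 2 ≤ f (t • s) ∧
        f (t • s) ≤ 3 / 2 * radialProfile (c s) (dotp (γ s) s) t := by
  obtain ⟨R, hR, hfR⟩ := hf (1 / 2) one_half_pos
  refine ⟨R, fun s hs t ht => ?_⟩
  have ht0 : 0 < t := hR.trans ht
  have hnorm : ‖t • s‖ = t := by rw [norm_smul, hs, mul_one, norm_of_nonneg ht0.le]
  have h := hfR (t • s) (by rwa [hnorm])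
  rw [hnorm, smul_smul, inv_mul_cancel₀ ht0.ne', one_smul, dotp_smul_left, dotp_comm s] at h
  refine half_le_and_le_three_halves_of_abs_div_sub_one_le
    (div_pos (hcpos s hs) (mul_pos (sqrt_pos.2 ht0) (exp_pos _))) ?_
  convert h using 3
  rw [radialProfile, div_div_eq_mul_div]
  ring

end

theorem stmt1_general {d : ℕ}
    (c : PiLp 1 (fun _ : Fin d => ℝ) → ℝ)
    (γ : PiLp 1 (fun _ : Fin d => ℝ) → PiLp 1 (fun _ : Fin d => ℝ))
    (hc : ContinuousOn c {s : PiLp 1 (fun _ : Fin d => ℝ) | ‖s‖ = 1})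
    (hγ : ContinuousOn γ {s : PiLp 1 (fun _ : Fin d => ℝ) | ‖s‖ = 1})
    (hcpos : ∀ s : PiLp 1 (fun _ : Fin d => ℝ), ‖s‖ = 1 → 0 < c s)
    (hγpos : ∀ s : PiLp 1 (fun _ : Fin d => ℝ), ‖s‖ = 1 → 0 < dotp (γ s) s)
    (f : PiLp 1 (fun _ : Fin d => ℝ) → ℝ)
    (hf : ∀ ε > (0 : ℝ), ∃ R > (0 : ℝ), ∀ z : PiLp 1 (fun _ : Fin d => ℝ), ‖z‖ > R →
      |f z * (c (‖z‖⁻¹ • z))⁻¹ * Real.sqrt ‖z‖ *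
        Real.exp (dotp z (γ (‖z‖⁻¹ • z))) - 1| ≤ ε)
    (β : ℝ) (hβ : 0 < β)
    (r : ℕ → PiLp 1 (fun _ : Fin d => ℝ) → ℝ)
    (hr : ∀ N : ℕ, 2 ≤ N → ∀ s : PiLp 1 (fun _ : Fin d => ℝ), ‖s‖ = 1 →
      r N s = sSup {t : ℝ | 0 < t ∧ f (t • s) ≥ β / N}) :
    ∀ ε > (0 : ℝ), ∃ N₀ : ℕ, 2 ≤ N₀ ∧ ∀ N : ℕ, N₀ ≤ N →
      ∀ s : PiLp 1 (fun _ : Fin d => ℝ), ‖s‖ = 1 →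
        |r N s / Real.log N - 1 / dotp (γ s) s| ≤ ε := by
  intro ε hε
  have hK : IsCompact {s : PiLp 1 (fun _ : Fin d => ℝ) | ‖s‖ = 1} := by
    simpa only [Metric.sphere, dist_zero_right] using
      isCompact_sphere (0 : PiLp 1 (fun _ : Fin d => ℝ)) 1
  have hg : ContinuousOn (fun s => dotp (γ s) s) {s : PiLp 1 (fun _ : Fin d => ℝ) | ‖s‖ = 1} :=
    hγ.dotp continuousOn_id
  obtain ⟨cmin, hcmin, hcmin_le⟩ := hK.exists_forall_le' hc hcpos
  obtain ⟨cmax, -, hcmax_ge⟩ := hK.exists_pos_forall_ge hc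
  obtain ⟨gmin, hgmin, hgmin_le⟩ := hK.exists_forall_le' hg hγpos
  obtain ⟨gmax, hgmax, hgmax_ge⟩ := hK.exists_pos_forall_ge hg
  obtain ⟨B, hB⟩ := exists_forall_radialProfile_bounds hcpos hf
  obtain ⟨N₁, hN₁⟩ := eventually_atTop.1 <| tendsto_natCast_atTop_atTop.eventually <|
    eventually_abs_sSup_superlevel_div_log_sub_le (cmax := cmax) (B := B) hcmin hgmin hgmax hβ
      (lt_min hε (by positivity)) (min_le_right ε (1 / (2 * gmax)))
  refine ⟨max N₁ 2, le_max_right _ _, fun N hN s hs => ?_⟩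
  rw [hr N (le_of_max_le_right hN) s hs]
  exact (hN₁ N (le_of_max_le_left hN) (fun t => f (t • s)) (c s) (dotp (γ s) s)
    ⟨hcmin_le s hs, hcmax_ge s hs⟩ ⟨hgmin_le s hs, hgmax_ge s hs⟩ (hB s hs)).trans (min_le_left _ _)

/-- As `N → ∞`, `R_{N,s} / log N → 1/(γ(s)·s)` uniformly in `s` on the unit `ℓ¹` sphere. -/
theorem stmt1 {d : ℕ} (hd : 1 ≤ d)
    (c : PiLp 1 (fun _ : Fin d => ℝ) → ℝ)
    (γ : PiLp 1 (fun _ : Fin d => ℝ) → PiLp 1 (fun _ : Fin d => ℝ))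
    (hc : ContinuousOn c {s : PiLp 1 (fun _ : Fin d => ℝ) | ‖s‖ = 1})
    (hγ : ContinuousOn γ {s : PiLp 1 (fun _ : Fin d => ℝ) | ‖s‖ = 1})
    (hcpos : ∀ s : PiLp 1 (fun _ : Fin d => ℝ), ‖s‖ = 1 → 0 < c s)
    (hγpos : ∀ s : PiLp 1 (fun _ : Fin d => ℝ), ‖s‖ = 1 → 0 < dotp (γ s) s)
    (f : PiLp 1 (fun _ : Fin d => ℝ) → ℝ)
    (hf : ∀ ε > (0 : ℝ), ∃ R > (0 : ℝ), ∀ z : PiLp 1 (fun _ : Fin d => ℝ), ‖z‖ > R →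
      |f z * (c (‖z‖⁻¹ • z))⁻¹ * Real.sqrt ‖z‖ *
        Real.exp (dotp z (γ (‖z‖⁻¹ • z))) - 1| ≤ ε)
    (β : ℝ) (hβ : 0 < β)
    (r : ℕ → PiLp 1 (fun _ : Fin d => ℝ) → ℝ)
    (hr : ∀ N : ℕ, 2 ≤ N → ∀ s : PiLp 1 (fun _ : Fin d => ℝ), ‖s‖ = 1 →
      r N s = sSup {t : ℝ | 0 < t ∧ f (t • s) ≥ β / N}) :
    ∀ ε > (0 : ℝ), ∃ N₀ : ℕ, 2 ≤ N₀ ∧ ∀ N : ℕ, N₀ ≤ N →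
      ∀ s : PiLp 1 (fun _ : Fin d => ℝ), ‖s‖ = 1 →
        |r N s / Real.log N - 1 / dotp (γ s) s| ≤ ε :=
  stmt1_general c γ hc hγ hcpos hγpos f hf β hβ r hr
end

section
/- Let N > 0, x₀ ∈ V, let u : V → ℝ be finitely supported with u ≥ 0, and let f : V → ℝ satisfy 0 ≤ f(x) ≤ D(x) for all x. Suppose that for every x ∈ V, Σ_{y∈V} (ρ(x,y)/D(y))·u(y) − u(x) = f(x) − N·1_{x = x₀}. Then for every x ∈ V, 0 ≤ U(x₀,x) − u(x)/N ≤ c'²/(c δ N). -/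
open Filter Topology

/-- Matrix powers of a kernel `P` on a countable set. -/
noncomputable def Ppow {V : Type*} [DecidableEq V] (P : V → V → ℝ) : ℕ → V → V → ℝ
  | 0 => fun x y => if x = y then 1 else 0
  | n + 1 => fun x y => ∑' z, P x z * Ppow P n z y

/-- The potential `U(x,y) = Σ_n Pⁿ(x,y)`. -/
noncomputable def pot {V : Type*} [DecidableEq V] (P : V → V → ℝ) (x y : V) : ℝ :=
  ∑' n, Ppow P n x y

/-! Read the hypothesis as `u P = u + f - N 1_{x₀}` for row vectors. Iterating gives
`u P^K = u + Σ_{k<K} (f Pᵏ - N Pᵏ(x₀, ·))`, and `u P^K → 0` because `u` is finitely supported, so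
`N U(x₀, x) - u x = Σ_k (f Pᵏ)(x) ≥ 0`. By the symmetry of `ρ`, `(D P)(w) = Σ_z ρ(w, z) = D w - m²(w)`,
so `D P ≤ (1 - δ) D` and hence `(f Pᵏ)(x) ≤ (D Pᵏ)(x) ≤ (1 - δ)ᵏ D x`; the sum is therefore at most
`D x / δ ≤ c'² / (c δ)`. -/
theorem summable_tsum_comm_of_nonneg {α β : Type*} {F : α → β → ℝ} (h0 : ∀ a b, 0 ≤ F a b)
    (hrow : ∀ a, Summable (F a)) (hsum : Summable fun a => ∑' b, F a b) :
    (Summable fun b => ∑' a, F a b) ∧ ∑' b, ∑' a, F a b = ∑' a, ∑' b, F a b := by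
  have hprod : Summable (Function.uncurry F) :=
    (summable_prod_of_nonneg fun p => h0 p.1 p.2).2 ⟨hrow, hsum⟩
  have hcol := (summable_prod_of_nonneg (f := fun p : β × α => F p.2 p.1)
    fun p => h0 p.2 p.1).1 hprod.prod_symm
  exact ⟨hcol.2, hprod.tsum_comm' hrow hcol.1⟩

section Kernel

variable {V : Type*}

structure IsSubinvariant (P : V → V → ℝ) (D : V → ℝ) (r : ℝ) : Prop where
  summable : ∀ w, Summable fun z => D z * P z w
  tsum_le : ∀ w, ∑' z, D z * P z w ≤ r * D w

theorem isSubinvariant_div_of_symm {ρ : V → V → ℝ} {m2 D : V → ℝ} {δ : ℝ}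
    (hsymm : ∀ x y, ρ x y = ρ y x) (hρsum : ∀ x, Summable (ρ x))
    (hD : ∀ x, D x = ∑' z, ρ x z + m2 x) (hDpos : ∀ x, 0 < D x)
    (hm2δ : ∀ x, δ ≤ m2 x / D x) :
    IsSubinvariant (fun x y => ρ x y / D x) D (1 - δ) := by
  have hDP : ∀ w z, D z * (ρ z w / D z) = ρ w z := fun w z => by
    rw [mul_div_cancel₀ _ (hDpos z).ne', hsymm]
  refine ⟨fun w => by simpa only [hDP] using hρsum w, fun w => ?_⟩
  have hm2 := (le_div_iff₀ (hDpos w)).1 (hm2δ w)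
  simp only [hDP]
  linarith [hD w]

variable [DecidableEq V] {P : V → V → ℝ}

theorem Ppow_zero_apply (x y : V) : Ppow P 0 x y = if x = y then 1 else 0 := rfl

theorem Ppow_succ_apply (n : ℕ) (x y : V) :
    Ppow P (n + 1) x y = ∑' z, P x z * Ppow P n z y := rfl

theorem Ppow_nonneg (hP : ∀ x y, 0 ≤ P x y) (n : ℕ) (x y : V) : 0 ≤ Ppow P n x y := by
  induction n generalizing x with
  | zero => rw [Ppow_zero_apply]; split_ifs <;> norm_num
  | succ n ih => exact tsum_nonneg fun z => mul_nonneg (hP x z) (ih z)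

namespace IsSubinvariant

variable {D : V → ℝ} {r : ℝ}

theorem summable_and_tsum_mul_Ppow_le (hS : IsSubinvariant P D r) (hP : ∀ x y, 0 ≤ P x y)
    (hD : ∀ x, 0 ≤ D x) (hr : 0 ≤ r) (n : ℕ) (x : V) :
    (Summable fun z => D z * Ppow P n z x) ∧ ∑' z, D z * Ppow P n z x ≤ r ^ n * D x := by
  induction n with
  | zero =>
    have hsingle : (fun z => D z * Ppow P 0 z x) = fun z => if z = x then D x else 0 := by
      ext z; rw [Ppow_zero_apply]; split_ifs with h <;> simp [h]
    rw [hsingle, tsum_ite_eq]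
    exact ⟨summable_of_ne_finset_zero (s := {x}) fun z hz => by simp_all, by simp⟩
  | succ n ih =>
    set F : V → V → ℝ := fun w z => D z * P z w * Ppow P n w x
    have hF : ∀ z, D z * Ppow P (n + 1) z x = ∑' w, F w z := fun z => by
      rw [Ppow_succ_apply, ← tsum_mul_left]; simp only [F, mul_assoc]
    have hF0 : ∀ w z, 0 ≤ F w z := fun w z =>
      mul_nonneg (mul_nonneg (hD z) (hP z w)) (Ppow_nonneg hP n w x)
    have hle : ∀ w, ∑' z, F w z ≤ r * (D w * Ppow P n w x) := fun w => by
      rw [tsum_mul_right, ← mul_assoc]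
      exact mul_le_mul_of_nonneg_right (hS.tsum_le w) (Ppow_nonneg hP n w x)
    have hsum : Summable fun w => ∑' z, F w z :=
      .of_nonneg_of_le (fun w => tsum_nonneg (hF0 w)) hle (ih.1.mul_left r)
    obtain ⟨hsum', hcomm⟩ :=
      summable_tsum_comm_of_nonneg hF0 (fun w => (hS.summable w).mul_right _) hsum
    simp only [hF]
    refine ⟨hsum', ?_⟩
    calc ∑' z, ∑' w, F w z = ∑' w, ∑' z, F w z := hcomm
      _ ≤ ∑' w, r * (D w * Ppow P n w x) := hsum.tsum_le_tsum hle (ih.1.mul_left r)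
      _ = r * ∑' w, D w * Ppow P n w x := tsum_mul_left
      _ ≤ r * (r ^ n * D x) := mul_le_mul_of_nonneg_left ih.2 hr
      _ = r ^ (n + 1) * D x := by ring

theorem mul_Ppow_le (hS : IsSubinvariant P D r) (hP : ∀ x y, 0 ≤ P x y) (hD : ∀ x, 0 ≤ D x)
    (hr : 0 ≤ r) (n : ℕ) (y x : V) : D y * Ppow P n y x ≤ r ^ n * D x :=
  have h := hS.summable_and_tsum_mul_Ppow_le hP hD hr n x
  (h.1.le_tsum y fun z _ => mul_nonneg (hD z) (Ppow_nonneg hP n z x)).trans h.2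

theorem summable_Ppow (hS : IsSubinvariant P D r) (hP : ∀ x y, 0 ≤ P x y)
    (hD : ∀ x, 0 < D x) (hr0 : 0 ≤ r) (hr1 : r < 1) (y x : V) :
    Summable fun n => Ppow P n y x := by
  refine .of_nonneg_of_le (fun n => Ppow_nonneg hP n y x) (fun n => ?_)
    ((summable_geometric_of_lt_one hr0 hr1).mul_right (D x / D y))
  rw [← mul_div_assoc, le_div_iff₀' (hD y)]
  exact hS.mul_Ppow_le hP (fun x => (hD x).le) hr0 n y x

theorem summable_mul_Ppow_of_summable (hS : IsSubinvariant P D r) (hP : ∀ x y, 0 ≤ P x y)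
    {c : ℝ} (hc : 0 < c) (hDc : ∀ x, c ≤ D x) (hr : 0 ≤ r) {g : V → ℝ} (hg : Summable g)
    (hg0 : ∀ z, 0 ≤ g z) (n : ℕ) (x : V) : Summable fun z => g z * Ppow P n z x := by
  refine .of_nonneg_of_le (fun z => mul_nonneg (hg0 z) (Ppow_nonneg hP n z x))
    (fun z => mul_le_mul_of_nonneg_left ?_ (hg0 z)) (hg.mul_right (r ^ n * D x / c))
  rw [le_div_iff₀' hc]
  exact (mul_le_mul_of_nonneg_right (hDc z) (Ppow_nonneg hP n z x)).trans
    (hS.mul_Ppow_le hP (fun x => hc.le.trans (hDc x)) hr n z x)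

variable {f : V → ℝ}

theorem summable_mul_Ppow_of_le (hS : IsSubinvariant P D r) (hP : ∀ x y, 0 ≤ P x y)
    (hr : 0 ≤ r) (hf0 : ∀ z, 0 ≤ f z) (hfD : ∀ z, f z ≤ D z) (n : ℕ) (x : V) :
    Summable fun z => f z * Ppow P n z x :=
  .of_nonneg_of_le (fun z => mul_nonneg (hf0 z) (Ppow_nonneg hP n z x))
    (fun z => mul_le_mul_of_nonneg_right (hfD z) (Ppow_nonneg hP n z x))
    (hS.summable_and_tsum_mul_Ppow_le hP (fun z => (hf0 z).trans (hfD z)) hr n x).1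

theorem tsum_mul_Ppow_le_of_le (hS : IsSubinvariant P D r) (hP : ∀ x y, 0 ≤ P x y)
    (hr : 0 ≤ r) (hf0 : ∀ z, 0 ≤ f z) (hfD : ∀ z, f z ≤ D z) (n : ℕ) (x : V) :
    ∑' z, f z * Ppow P n z x ≤ r ^ n * D x :=
  have h := hS.summable_and_tsum_mul_Ppow_le hP (fun z => (hf0 z).trans (hfD z)) hr n x
  ((hS.summable_mul_Ppow_of_le hP hr hf0 hfD n x).tsum_le_tsum
    (fun z => mul_le_mul_of_nonneg_right (hfD z) (Ppow_nonneg hP n z x)) h.1).trans h.2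

theorem tsum_tsum_mul_Ppow_le (hS : IsSubinvariant P D r) (hP : ∀ x y, 0 ≤ P x y)
    (hr0 : 0 ≤ r) (hr1 : r < 1) (hf0 : ∀ z, 0 ≤ f z) (hfD : ∀ z, f z ≤ D z) (x : V) :
    (Summable fun n => ∑' z, f z * Ppow P n z x) ∧
      ∑' n, ∑' z, f z * Ppow P n z x ≤ D x / (1 - r) := by
  have hgeom := (summable_geometric_of_lt_one hr0 hr1).mul_right (D x)
  have hle := hS.tsum_mul_Ppow_le_of_le hP hr0 hf0 hfD (x := x)
  have hsum : Summable fun n => ∑' z, f z * Ppow P n z x :=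
    .of_nonneg_of_le (fun n => tsum_nonneg fun z => mul_nonneg (hf0 z) (Ppow_nonneg hP n z x))
      hle hgeom
  refine ⟨hsum, (hsum.tsum_le_tsum hle hgeom).trans_eq ?_⟩
  rw [tsum_mul_right, tsum_geometric_of_lt_one hr0 hr1, div_eq_inv_mul]

end IsSubinvariant

variable {s : Finset V} {u g : V → ℝ}

theorem sum_mul_Ppow_succ (hu : ∀ y ∉ s, u y = 0) (heq : ∀ z, ∑ y ∈ s, u y * P y z = u z + g z)
    {k : ℕ} {x : V} (hsum : ∀ y ∈ s, Summable fun z => P y z * Ppow P k z x) :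
    ∑ y ∈ s, u y * Ppow P (k + 1) y x =
      ∑ y ∈ s, u y * Ppow P k y x + ∑' z, g z * Ppow P k z x := by
  have hterm : ∀ y ∈ s, Summable fun z => u y * P y z * Ppow P k z x := fun y hy => by
    simpa only [mul_assoc] using (hsum y hy).mul_left (u y)
  have hu_sum : Summable fun z => u z * Ppow P k z x :=
    summable_of_ne_finset_zero fun z hz => by rw [hu z hz, zero_mul]
  have hg_sum : Summable fun z => g z * Ppow P k z x := by
    have hmix := (summable_sum hterm).sub hu_sum
    simp only [← Finset.sum_mul, heq] at hmix
    simpa only [add_mul, add_sub_cancel_left] using hmix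
  calc ∑ y ∈ s, u y * Ppow P (k + 1) y x = ∑' z, ∑ y ∈ s, u y * P y z * Ppow P k z x := by
        rw [Summable.tsum_finsetSum hterm]
        refine Finset.sum_congr rfl fun y _ => ?_
        rw [Ppow_succ_apply, ← tsum_mul_left]
        simp only [mul_assoc]
    _ = ∑' z, (u z * Ppow P k z x + g z * Ppow P k z x) := by
        simp only [← Finset.sum_mul, heq, add_mul]
    _ = _ := by
        rw [hu_sum.tsum_add hg_sum, tsum_eq_sum fun z hz => by rw [hu z hz, zero_mul]]

theorem sum_mul_Ppow_eq_add_sum_range (hu : ∀ y ∉ s, u y = 0)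
    (heq : ∀ z, ∑ y ∈ s, u y * P y z = u z + g z) {x : V}
    (hsum : ∀ k, ∀ y ∈ s, Summable fun z => P y z * Ppow P k z x) (K : ℕ) :
    ∑ y ∈ s, u y * Ppow P K y x = u x + ∑ k ∈ Finset.range K, ∑' z, g z * Ppow P k z x := by
  induction K with
  | zero =>
    simp only [Ppow_zero_apply, mul_ite, mul_one, mul_zero, Finset.sum_ite_eq',
      Finset.range_zero, Finset.sum_empty, add_zero]
    split_ifs with hx
    · rfl
    · exact (hu x hx).symm
  | succ K ih => rw [sum_mul_Ppow_succ hu heq (hsum K), ih, Finset.sum_range_succ, add_assoc]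

theorem tsum_tsum_mul_Ppow_eq_neg (hu : ∀ y ∉ s, u y = 0)
    (heq : ∀ z, ∑ y ∈ s, u y * P y z = u z + g z) {x : V}
    (hsum : ∀ k, ∀ y ∈ s, Summable fun z => P y z * Ppow P k z x)
    (hlim : ∀ y ∈ s, Tendsto (fun K => Ppow P K y x) atTop (𝓝 0))
    (hg : Summable fun k => ∑' z, g z * Ppow P k z x) :
    ∑' k, ∑' z, g z * Ppow P k z x = -u x := by
  have hu_lim : Tendsto (fun K => ∑ y ∈ s, u y * Ppow P K y x) atTop (𝓝 0) := by
    simpa using tendsto_finsetSum s fun y hy => (hlim y hy).const_mul (u y)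
  simp only [sum_mul_Ppow_eq_add_sum_range hu heq hsum] at hu_lim
  exact tendsto_nhds_unique hg.hasSum.tendsto_sum_nat (by simpa using hu_lim.sub_const (u x))

theorem IsSubinvariant.tsum_tsum_mul_Ppow_eq {D f : V → ℝ} {r c N : ℝ} {x₀ : V}
    (hS : IsSubinvariant P D r) (hP : ∀ x y, 0 ≤ P x y) (hrow : ∀ x, Summable (P x))
    (hc : 0 < c) (hDc : ∀ x, c ≤ D x) (hr0 : 0 ≤ r) (hr1 : r < 1)
    (hf0 : ∀ z, 0 ≤ f z) (hfD : ∀ z, f z ≤ D z) (hu : ∀ y ∉ s, u y = 0)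
    (heq : ∀ z, ∑ y ∈ s, u y * P y z = u z + (f z - N * if z = x₀ then 1 else 0)) (x : V) :
    ∑' k, ∑' z, f z * Ppow P k z x = N * pot P x₀ x - u x := by
  have hD : ∀ x, 0 < D x := fun x => hc.trans_le (hDc x)
  have hf := (hS.tsum_tsum_mul_Ppow_le hP hr0 hr1 hf0 hfD x).1
  have hpot := (hS.summable_Ppow hP hD hr0 hr1 x₀ x).mul_left N
  have hsplit : ∀ k, ∑' z, (f z - N * if z = x₀ then 1 else 0) * Ppow P k z x =
      ∑' z, f z * Ppow P k z x - N * Ppow P k x₀ x := fun k => by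
    have hpt : (fun z => (f z - N * if z = x₀ then 1 else 0) * Ppow P k z x) =
        fun z => f z * Ppow P k z x - if z = x₀ then N * Ppow P k x₀ x else 0 := by
      ext z; split_ifs with h <;> simp [h, sub_mul]
    rw [hpt, ((hS.summable_mul_Ppow_of_le hP hr0 hf0 hfD k x).hasSum.sub
      (hasSum_ite_eq x₀ _)).tsum_eq]
  have key := tsum_tsum_mul_Ppow_eq_neg hu heq
    (fun k y _ => hS.summable_mul_Ppow_of_summable hP hc hDc hr0 (hrow y) (hP y) k x)
    (fun y _ => (hS.summable_Ppow hP hD hr0 hr1 y x).tendsto_atTop_zero)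
    (by simpa only [hsplit] using hf.sub hpot)
  rw [funext hsplit, hf.tsum_sub hpot, tsum_mul_left] at key
  rw [pot]
  linarith

end Kernel

theorem stmt9_general {V : Type*} [DecidableEq V]
    (ρ : V → V → ℝ) (m2 : V → ℝ)
    (hsymm : ∀ x y, ρ x y = ρ y x)
    (hρ : ∀ x y, 0 ≤ ρ x y)
    (hρsum : ∀ x, Summable (fun z => ρ x z))
    (D : V → ℝ) (hD : ∀ x, D x = (∑' z, ρ x z) + m2 x)
    (c c' δ : ℝ) (hc : 0 < c) (hcc' : c ≤ c') (hδ : δ ∈ Set.Ioo (0 : ℝ) 1)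
    (hDb : ∀ x, c ≤ D x ∧ D x ≤ c')
    (hm2δ : ∀ x, δ ≤ m2 x / D x)
    (P : V → V → ℝ) (hPdef : ∀ x y, P x y = ρ x y / D x)
    (N : ℝ) (hN : 0 < N) (x₀ : V)
    (u f : V → ℝ)
    (hufin : (Function.support u).Finite)
    (hfb : ∀ x, 0 ≤ f x ∧ f x ≤ D x)
    (heq : ∀ x, (∑' y, (ρ x y / D y) * u y) - u x = f x - N * (if x = x₀ then 1 else 0)) :
    ∀ x, 0 ≤ pot P x₀ x - u x / N ∧ pot P x₀ x - u x / N ≤ c' ^ 2 / (c * δ * N) := by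
  obtain ⟨hδ0, hδ1⟩ := hδ
  obtain rfl : P = fun x y => ρ x y / D x := funext₂ hPdef
  have hDpos : ∀ x, 0 < D x := fun x => hc.trans_le (hDb x).1
  have hS := isSubinvariant_div_of_symm hsymm hρsum hD hDpos hm2δ
  have hP : ∀ x y, 0 ≤ ρ x y / D x := fun x y => div_nonneg (hρ x y) (hDpos x).le
  have hu : ∀ y ∉ hufin.toFinset, u y = 0 := fun y hy => by simpa using hy
  have heq' : ∀ z, ∑ y ∈ hufin.toFinset, u y * (ρ y z / D y) =
      u z + (f z - N * if z = x₀ then 1 else 0) := fun z => by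
    have h := heq z
    rw [tsum_eq_sum (s := hufin.toFinset) fun y hy => by rw [hu y hy, mul_zero]] at h
    simp only [hsymm z, mul_comm (u _)] at h ⊢
    linarith
  intro x
  have hid := hS.tsum_tsum_mul_Ppow_eq hP (fun x => (hρsum x).div_const _) hc (fun x => (hDb x).1)
    (by linarith) (by linarith) (fun z => (hfb z).1) (fun z => (hfb z).2) hu heq' x
  have hB := (hS.tsum_tsum_mul_Ppow_le hP (by linarith) (by linarith) (fun z => (hfb z).1)
    (fun z => (hfb z).2) x).2
  have hB0 : 0 ≤ ∑' k, ∑' z, f z * Ppow _ k z x :=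
    tsum_nonneg fun k => tsum_nonneg fun z => mul_nonneg (hfb z).1 (Ppow_nonneg hP k z x)
  rw [hid] at hB hB0
  rw [sub_sub_cancel, le_div_iff₀ hδ0] at hB
  rw [show pot _ x₀ x - u x / N = (N * pot _ x₀ x - u x) / N by field_simp]
  refine ⟨div_nonneg hB0 hN.le, ?_⟩
  rw [div_le_div_iff₀ hN (by positivity)]
  nlinarith [mul_le_mul_of_nonneg_right hB (mul_pos hc hN).le,
    mul_le_mul_of_nonneg_right (mul_le_mul (hDb x).2 hcc' hc.le (hc.le.trans hcc')) hN.le]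

/-- If the odometer `u` satisfies `Tu = f − N δ_{x₀}` with `0 ≤ f ≤ D`, then
`0 ≤ U(x₀,x) − u(x)/N ≤ c'²/(c δ N)` for every `x`. -/
theorem stmt9 {V : Type*} [Countable V] [DecidableEq V]
    (ρ : V → V → ℝ) (m2 : V → ℝ)
    (hsymm : ∀ x y, ρ x y = ρ y x)
    (hρ : ∀ x y, 0 ≤ ρ x y) (hdiag : ∀ x, ρ x x = 0)
    (hm2 : ∀ x, 0 ≤ m2 x)
    (hρsum : ∀ x, Summable (fun z => ρ x z))
    (D : V → ℝ) (hD : ∀ x, D x = (∑' z, ρ x z) + m2 x)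
    (c c' δ : ℝ) (hc : 0 < c) (hcc' : c ≤ c') (hδ : δ ∈ Set.Ioo (0 : ℝ) 1)
    (hDb : ∀ x, c ≤ D x ∧ D x ≤ c')
    (hm2δ : ∀ x, δ ≤ m2 x / D x)
    (P : V → V → ℝ) (hPdef : ∀ x y, P x y = ρ x y / D x)
    (N : ℝ) (hN : 0 < N) (x₀ : V)
    (u f : V → ℝ)
    (hufin : (Function.support u).Finite) (hupos : ∀ x, 0 ≤ u x)
    (hfb : ∀ x, 0 ≤ f x ∧ f x ≤ D x)
    (heq : ∀ x, (∑' y, (ρ x y / D y) * u y) - u x = f x - N * (if x = x₀ then 1 else 0)) :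
    ∀ x, 0 ≤ pot P x₀ x - u x / N ∧ pot P x₀ x - u x / N ≤ c' ^ 2 / (c * δ * N) :=
  stmt9_general ρ m2 hsymm hρ hρsum D hD c c' δ hc hcc' hδ hDb hm2δ P hPdef N hN x₀ u f hufin hfb
    heq
end

section
/- Let N > 0, x₀ ∈ V, let u : V → ℝ be finitely supported with u ≥ 0 and such that for every x either u(x) = 0 or u(x) ≥ D(x), and let f : V → ℝ satisfy 0 ≤ f(x) ≤ D(x) for all x. Suppose that for every x ∈ V, Σ_{y∈V} (ρ(x,y)/D(y))·u(y) − u(x) = f(x) − N·1_{x = x₀}. Then for every x ∈ V: if U(x₀,x) > c'²/(c δ N) then u(x) > 0, and if U(x₀,x) < c/N then u(x) = 0. -/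
open Filter Topology

/-!
By symmetry of `ρ`, the hypothesis says `u + f = u P + N 𝟙_{x₀}` as row vectors, all terms
nonnegative. The weight `D` is excessive, `D P ≤ (1 - δ) D`, so `u Pⁿ → 0` for the finitely
supported `u`, and iterating gives `u + f U = N U(x₀, ·)`. As `0 ≤ f U ≤ D U ≤ D / δ`, this pins
`N U(x₀, x)` between `u x` and `u x + D x / δ`; the two thresholds then follow from
`c ≤ D ≤ c'` and the dichotomy `u x = 0 ∨ D x ≤ u x`. Matrix powers are handled in `ℝ≥0∞`,
where the nonnegative double series can be rearranged freely.
-/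

open ENNReal

namespace ENNKernel

variable {V : Type*}

noncomputable def vecMul (μ : V → ℝ≥0∞) (Q : V → V → ℝ≥0∞) (x : V) : ℝ≥0∞ :=
  ∑' y, μ y * Q y x

variable [DecidableEq V]

noncomputable def pow (Q : V → V → ℝ≥0∞) : ℕ → V → V → ℝ≥0∞
  | 0 => fun x y => if x = y then 1 else 0
  | n + 1 => fun x y => ∑' z, Q x z * pow Q n z y

noncomputable def potential (Q : V → V → ℝ≥0∞) (x y : V) : ℝ≥0∞ :=
  ∑' n, pow Q n x y

variable {Q : V → V → ℝ≥0∞} {μ ν φ ψ w : V → ℝ≥0∞} {r : ℝ≥0∞}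

omit [DecidableEq V] in
lemma vecMul_add : vecMul (μ + ν) Q = vecMul μ Q + vecMul ν Q := by
  ext x
  simp only [vecMul, Pi.add_apply, add_mul, ENNReal.tsum_add]

omit [DecidableEq V] in
lemma vecMul_mono (h : μ ≤ ν) : vecMul μ Q ≤ vecMul ν Q := fun _ =>
  ENNReal.tsum_le_tsum fun y => mul_le_mul_left (h y) _

omit [DecidableEq V] in
lemma vecMul_smul (a : ℝ≥0∞) : vecMul (a • μ) Q = a • vecMul μ Q := by
  ext x
  simp only [vecMul, Pi.smul_apply, smul_eq_mul, mul_assoc, ENNReal.tsum_mul_left]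

lemma vecMul_single (x₀ : V) (a : ℝ≥0∞) (x : V) :
    vecMul (Pi.single x₀ a) Q x = a * Q x₀ x := by
  rw [vecMul, tsum_eq_single x₀ fun y hy => by simp [hy]]
  simp

lemma vecMul_pow_zero : vecMul μ (pow Q 0) = μ := by
  ext x
  rw [vecMul, tsum_eq_single x fun y hy => by simp [pow, hy]]
  simp [pow]

lemma vecMul_pow_succ (n : ℕ) :
    vecMul μ (pow Q (n + 1)) = vecMul (vecMul μ Q) (pow Q n) := by
  ext x
  simp only [vecMul, pow, ← ENNReal.tsum_mul_left, ← ENNReal.tsum_mul_right, mul_assoc]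
  exact ENNReal.tsum_comm

lemma vecMul_potential (x : V) :
    vecMul μ (potential Q) x = ∑' n, vecMul μ (pow Q n) x := by
  simp only [vecMul, potential, ← ENNReal.tsum_mul_left]
  exact ENNReal.tsum_comm

lemma add_sum_vecMul_pow (h : μ + φ = vecMul μ Q + ψ) (n : ℕ) :
    μ + ∑ k ∈ Finset.range n, vecMul φ (pow Q k) =
      vecMul μ (pow Q n) + ∑ k ∈ Finset.range n, vecMul ψ (pow Q k) := by
  induction n with
  | zero => simp [vecMul_pow_zero]
  | succ n ih =>
    calc μ + ∑ k ∈ Finset.range (n + 1), vecMul φ (pow Q k)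
        = vecMul (μ + φ) (pow Q n) + ∑ k ∈ Finset.range n, vecMul ψ (pow Q k) := by
          rw [Finset.sum_range_succ, ← add_assoc, ih, vecMul_add]
          abel
      _ = _ := by
          rw [h, vecMul_add, ← vecMul_pow_succ, Finset.sum_range_succ]
          abel

lemma add_vecMul_potential (h : μ + φ = vecMul μ Q + ψ) (x : V)
    (hμ : Tendsto (fun n => vecMul μ (pow Q n) x) atTop (𝓝 0)) :
    μ x + vecMul φ (potential Q) x = vecMul ψ (potential Q) x := by
  have hφ := (ENNReal.tendsto_nat_tsum fun k => vecMul φ (pow Q k) x).const_add (μ x)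
  have hψ := hμ.add (ENNReal.tendsto_nat_tsum fun k => vecMul ψ (pow Q k) x)
  rw [zero_add] at hψ
  rw [vecMul_potential, vecMul_potential]
  refine tendsto_nhds_unique hφ (hψ.congr fun n => ?_)
  simpa [Finset.sum_apply] using (congrFun (add_sum_vecMul_pow h n) x).symm

section Excessive

variable (hw : ∀ x, vecMul w Q x ≤ r * w x)
include hw

lemma vecMul_pow_le : ∀ n x, vecMul w (pow Q n) x ≤ r ^ n * w x
  | 0, x => by rw [vecMul_pow_zero, pow_zero, one_mul]
  | n + 1, x => calc
      vecMul w (pow Q (n + 1)) x = vecMul (vecMul w Q) (pow Q n) x := by rw [vecMul_pow_succ]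
      _ ≤ vecMul (r • w) (pow Q n) x := vecMul_mono hw x
      _ = r * vecMul w (pow Q n) x := by rw [vecMul_smul]; rfl
      _ ≤ r * (r ^ n * w x) := mul_le_mul_right (vecMul_pow_le n x) r
      _ = r ^ (n + 1) * w x := by ring

lemma pow_apply_ne_top (hr : r ≠ ⊤) (hw0 : ∀ x, w x ≠ 0) (hwtop : ∀ x, w x ≠ ⊤)
    (n : ℕ) (x y : V) : pow Q n x y ≠ ⊤ := by
  intro htop
  have h := (ENNReal.le_tsum x).trans (vecMul_pow_le hw n y)
  rw [htop, ENNReal.mul_top (hw0 x), top_le_iff] at h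
  exact ENNReal.mul_ne_top (ENNReal.pow_ne_top hr) (hwtop y) h

lemma vecMul_potential_le (x : V) : vecMul w (potential Q) x ≤ (1 - r)⁻¹ * w x := by
  rw [vecMul_potential, ← ENNReal.tsum_geometric, ← ENNReal.tsum_mul_right]
  exact ENNReal.tsum_le_tsum fun n => vecMul_pow_le hw n x

lemma tendsto_vecMul_pow_zero (hr : r < 1) {K : ℝ≥0∞} (hK : K ≠ ⊤) (hμ : μ ≤ K • w)
    (x : V) (hx : w x ≠ ⊤) : Tendsto (fun n => vecMul μ (pow Q n) x) atTop (𝓝 0) := by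
  have hlim : Tendsto (fun n => K * (r ^ n * w x)) atTop (𝓝 0) := by
    simpa using ENNReal.Tendsto.const_mul (ENNReal.Tendsto.mul_const
      (ENNReal.tendsto_pow_atTop_nhds_zero_of_lt_one hr) (Or.inr hx)) (Or.inr hK)
  refine tendsto_of_tendsto_of_tendsto_of_le_of_le tendsto_const_nhds hlim
    (fun _ => zero_le) fun n => ?_
  calc vecMul μ (pow Q n) x ≤ vecMul (K • w) (pow Q n) x := vecMul_mono hμ x
    _ = K * vecMul w (pow Q n) x := by rw [vecMul_smul]; rfl
    _ ≤ K * (r ^ n * w x) := mul_le_mul_right (vecMul_pow_le hw n x) K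

end Excessive

end ENNKernel

section

variable {V : Type*} [DecidableEq V] {P : V → V → ℝ}

lemma Ppow_eq_toReal_pow (hP : ∀ x y, 0 ≤ P x y)
    (hfin : ∀ n x y, ENNKernel.pow (fun x y => ENNReal.ofReal (P x y)) n x y ≠ ⊤) :
    ∀ n x y, Ppow P n x y = (ENNKernel.pow (fun x y => ENNReal.ofReal (P x y)) n x y).toReal
  | 0, x, y => by by_cases h : x = y <;> simp [Ppow, ENNKernel.pow, h]
  | n + 1, x, y => by
    rw [Ppow, ENNKernel.pow, ENNReal.tsum_toReal_eq fun z => mul_ne_top ofReal_ne_top (hfin n z y)]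
    refine tsum_congr fun z => ?_
    rw [toReal_mul, toReal_ofReal (hP x z), Ppow_eq_toReal_pow hP hfin n z y]

lemma pot_eq_toReal_potential (hP : ∀ x y, 0 ≤ P x y)
    (hfin : ∀ n x y, ENNKernel.pow (fun x y => ENNReal.ofReal (P x y)) n x y ≠ ⊤) (x y : V) :
    pot P x y = (ENNKernel.potential (fun x y => ENNReal.ofReal (P x y)) x y).toReal := by
  rw [ENNKernel.potential, ENNReal.tsum_toReal_eq fun n => hfin n x y]
  exact tsum_congr fun n => Ppow_eq_toReal_pow hP hfin n x y

end

lemma Function.exists_le_mul_of_finite_support {V : Type*} {u w : V → ℝ}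
    (hu : (Function.support u).Finite) (hw : ∀ x, 0 < w x) : ∃ K, ∀ x, u x ≤ K * w x := by
  have hterm : ∀ y, 0 ≤ |u y| / w y := fun y => div_nonneg (abs_nonneg _) (hw y).le
  refine ⟨∑ y ∈ hu.toFinset, |u y| / w y, fun x => ?_⟩
  by_cases hx : u x = 0
  · rw [hx]
    exact mul_nonneg (Finset.sum_nonneg fun y _ => hterm y) (hw x).le
  calc u x ≤ |u x| / w x * w x := by rw [div_mul_cancel₀ _ (hw x).ne']; exact le_abs_self _
    _ ≤ (∑ y ∈ hu.toFinset, |u y| / w y) * w x := mul_le_mul_of_nonneg_right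
        (Finset.single_le_sum (fun y _ => hterm y) (hu.mem_toFinset.2 hx)) (hw x).le

section

variable {V : Type*} {ρ : V → V → ℝ} {D m2 u f : V → ℝ} {δ N : ℝ}

lemma vecMul_ofReal_le_one_sub_mul (hsymm : ∀ x y, ρ x y = ρ y x) (hρ : ∀ x y, 0 ≤ ρ x y)
    (hρsum : ∀ x, Summable (fun z => ρ x z)) (hD : ∀ x, D x = (∑' z, ρ x z) + m2 x)
    (hDpos : ∀ x, 0 < D x) (hm2δ : ∀ x, δ ≤ m2 x / D x) (x : V) :
    ENNKernel.vecMul (fun y => ENNReal.ofReal (D y)) (fun x y => ENNReal.ofReal (ρ x y / D x)) x ≤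
      ENNReal.ofReal (1 - δ) * ENNReal.ofReal (D x) := by
  have hm2 : δ * D x ≤ m2 x := (le_div_iff₀ (hDpos x)).1 (hm2δ x)
  calc ENNKernel.vecMul (fun y => ENNReal.ofReal (D y)) (fun x y => ENNReal.ofReal (ρ x y / D x)) x
      = ∑' y, ENNReal.ofReal (ρ x y) := tsum_congr fun y => by
        rw [← ofReal_mul (hDpos y).le, mul_div_cancel₀ _ (hDpos y).ne', hsymm]
    _ = ENNReal.ofReal (∑' y, ρ x y) := (ofReal_tsum_of_nonneg (hρ x) (hρsum x)).symm
    _ ≤ ENNReal.ofReal ((1 - δ) * D x) := ofReal_le_ofReal (by linarith [hD x])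
    _ = ENNReal.ofReal (1 - δ) * ENNReal.ofReal (D x) := ofReal_mul' (hDpos x).le

lemma ofReal_add_eq_vecMul_add_single [DecidableEq V] {x₀ : V} (hsymm : ∀ x y, ρ x y = ρ y x)
    (hρ : ∀ x y, 0 ≤ ρ x y) (hDpos : ∀ x, 0 < D x) (hufin : (Function.support u).Finite)
    (hupos : ∀ x, 0 ≤ u x) (hf : ∀ x, 0 ≤ f x) (hN : 0 ≤ N)
    (heq : ∀ x, (∑' y, (ρ x y / D y) * u y) - u x = f x - N * (if x = x₀ then 1 else 0)) :
    (fun x => ENNReal.ofReal (u x)) + (fun x => ENNReal.ofReal (f x)) =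
      ENNKernel.vecMul (fun y => ENNReal.ofReal (u y)) (fun x y => ENNReal.ofReal (ρ x y / D x)) +
        Pi.single x₀ (ENNReal.ofReal N) := by
  ext x
  have hterm : ∀ y, 0 ≤ ρ x y / D y * u y := fun y =>
    mul_nonneg (div_nonneg (hρ x y) (hDpos y).le) (hupos y)
  have hsum : Summable fun y => ρ x y / D y * u y :=
    summable_of_hasFiniteSupport (hufin.subset (Function.support_mul_subset_right _ _))
  have hsrc : 0 ≤ N * (if x = x₀ then 1 else 0) := by split_ifs <;> simp [hN]
  have hreal : u x + f x = (∑' y, ρ x y / D y * u y) + N * (if x = x₀ then 1 else 0) := by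
    linarith [heq x]
  simp only [Pi.add_apply, ENNKernel.vecMul]
  rw [← ofReal_add (hupos x) (hf x), hreal, ofReal_add (tsum_nonneg hterm) hsrc,
    ofReal_tsum_of_nonneg hterm hsum]
  congr 1
  · refine tsum_congr fun y => ?_
    rw [hsymm, mul_comm, ofReal_mul (hupos y)]
  · by_cases h : x = x₀
    · subst h; simp
    · simp [h]

lemma le_mul_pot_and_mul_pot_le [DecidableEq V] {x₀ : V} (hsymm : ∀ x y, ρ x y = ρ y x)
    (hρ : ∀ x y, 0 ≤ ρ x y) (hρsum : ∀ x, Summable (fun z => ρ x z))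
    (hD : ∀ x, D x = (∑' z, ρ x z) + m2 x) (hDpos : ∀ x, 0 < D x) (hδ : δ ∈ Set.Ioo (0 : ℝ) 1)
    (hm2δ : ∀ x, δ ≤ m2 x / D x) (hN : 0 < N) (hufin : (Function.support u).Finite)
    (hupos : ∀ x, 0 ≤ u x) (hfb : ∀ x, 0 ≤ f x ∧ f x ≤ D x)
    (heq : ∀ x, (∑' y, (ρ x y / D y) * u y) - u x = f x - N * (if x = x₀ then 1 else 0))
    (x : V) :
    u x ≤ N * pot (fun x y => ρ x y / D x) x₀ x ∧
      N * pot (fun x y => ρ x y / D x) x₀ x ≤ u x + D x / δ := by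
  obtain ⟨hδ0, hδ1⟩ := hδ
  set Q : V → V → ℝ≥0∞ := fun x y => ENNReal.ofReal (ρ x y / D x)
  set w : V → ℝ≥0∞ := fun x => ENNReal.ofReal (D x)
  set F := ENNKernel.vecMul (fun y => ENNReal.ofReal (f y)) (ENNKernel.potential Q) x
  have hw : ∀ x, ENNKernel.vecMul w Q x ≤ ENNReal.ofReal (1 - δ) * w x :=
    vecMul_ofReal_le_one_sub_mul hsymm hρ hρsum hD hDpos hm2δ
  have hfin : ∀ n x y, ENNKernel.pow Q n x y ≠ ⊤ :=
    ENNKernel.pow_apply_ne_top hw ofReal_ne_top (fun x => (ofReal_pos.2 (hDpos x)).ne')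
      fun _ => ofReal_ne_top
  obtain ⟨K, hK⟩ := Function.exists_le_mul_of_finite_support hufin hDpos
  have hdecay : Tendsto (fun n =>
      ENNKernel.vecMul (fun y => ENNReal.ofReal (u y)) (ENNKernel.pow Q n) x) atTop (𝓝 0) :=
    ENNKernel.tendsto_vecMul_pow_zero hw (ofReal_lt_one.2 (by linarith)) ofReal_ne_top
      (fun y => (ofReal_le_ofReal (hK y)).trans_eq (ofReal_mul' (hDpos y).le)) x ofReal_ne_top
  have hident : ENNReal.ofReal (u x) + F = ENNReal.ofReal N * ENNKernel.potential Q x₀ x := by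
    rw [← ENNKernel.vecMul_single]
    exact ENNKernel.add_vecMul_potential (ofReal_add_eq_vecMul_add_single hsymm hρ hDpos hufin
      hupos (fun x => (hfb x).1) hN.le heq) x hdecay
  have hF : F ≤ ENNReal.ofReal (D x / δ) := calc
    F ≤ ENNKernel.vecMul w (ENNKernel.potential Q) x :=
      ENNKernel.vecMul_mono (fun y => ofReal_le_ofReal (hfb y).2) x
    _ ≤ (1 - ENNReal.ofReal (1 - δ))⁻¹ * w x := ENNKernel.vecMul_potential_le hw x
    _ = ENNReal.ofReal (D x / δ) := by
      rw [div_eq_mul_inv, ofReal_mul (hDpos x).le, ofReal_inv_of_pos hδ0, mul_comm,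
        ← ofReal_one, ← ofReal_sub _ (by linarith), _root_.sub_sub_cancel]
  have hFtop : F ≠ ⊤ := ne_top_of_le_ne_top ofReal_ne_top hF
  have hreal := congrArg ENNReal.toReal hident
  rw [toReal_add ofReal_ne_top hFtop, toReal_mul, toReal_ofReal (hupos x), toReal_ofReal hN.le,
    ← pot_eq_toReal_potential (fun x y => div_nonneg (hρ x y) (hDpos x).le) hfin] at hreal
  have hFle := toReal_le_of_le_ofReal (div_nonneg (hDpos x).le hδ0.le) hF
  constructor <;> linarith [toReal_nonneg (a := F)]

end

theorem stmt10_general {V : Type*} [DecidableEq V]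
    (ρ : V → V → ℝ) (m2 : V → ℝ)
    (hsymm : ∀ x y, ρ x y = ρ y x)
    (hρ : ∀ x y, 0 ≤ ρ x y)
    (hρsum : ∀ x, Summable (fun z => ρ x z))
    (D : V → ℝ) (hD : ∀ x, D x = (∑' z, ρ x z) + m2 x)
    (c c' δ : ℝ) (hc : 0 < c) (hcc' : c ≤ c') (hδ : δ ∈ Set.Ioo (0 : ℝ) 1)
    (hDb : ∀ x, c ≤ D x ∧ D x ≤ c')
    (hm2δ : ∀ x, δ ≤ m2 x / D x)
    (P : V → V → ℝ) (hPdef : ∀ x y, P x y = ρ x y / D x)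
    (N : ℝ) (hN : 0 < N) (x₀ : V)
    (u f : V → ℝ)
    (hufin : (Function.support u).Finite) (hupos : ∀ x, 0 ≤ u x)
    (huq : ∀ x, u x = 0 ∨ D x ≤ u x)
    (hfb : ∀ x, 0 ≤ f x ∧ f x ≤ D x)
    (heq : ∀ x, (∑' y, (ρ x y / D y) * u y) - u x = f x - N * (if x = x₀ then 1 else 0)) :
    ∀ x, (pot P x₀ x > c' ^ 2 / (c * δ * N) → 0 < u x) ∧
      (pot P x₀ x < c / N → u x = 0) := by
  obtain rfl : P = fun x y => ρ x y / D x := funext₂ hPdef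
  have hDpos : ∀ x, 0 < D x := fun x => hc.trans_le (hDb x).1
  intro x
  obtain ⟨hupper, hlower⟩ := le_mul_pot_and_mul_pot_le hsymm hρ hρsum hD hDpos hδ hm2δ hN hufin
    hupos hfb heq x
  generalize pot (fun x y => ρ x y / D x) x₀ x = U at hupper hlower ⊢
  obtain ⟨hDc, hDc'⟩ := hDb x
  constructor
  · intro hgt
    have hcδ : 0 < c * δ := mul_pos hc hδ.1
    have hNpot : c' ^ 2 / (c * δ) < N * U := by
      rw [gt_iff_lt, div_lt_iff₀ (mul_pos hcδ hN)] at hgt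
      rw [div_lt_iff₀' hcδ]
      linarith
    have hDδ : D x / δ ≤ c' ^ 2 / (c * δ) := by
      rw [div_le_div_iff₀ hδ.1 hcδ]
      nlinarith [mul_le_mul hDc' hcc' hc.le (hc.trans_le hcc').le, hδ.1]
    linarith
  · intro hlt
    have hNpot : N * U < c := by rwa [lt_div_iff₀' hN] at hlt
    exact (huq x).resolve_right fun hDu => by linarith

/-- Threshold dichotomy: if `U(x₀,x) > c'²/(c δ N)` then `x` is in the shape
(`u(x) > 0`), and if `U(x₀,x) < c/N` then it is not (`u(x) = 0`). -/
theorem stmt10 {V : Type*} [Countable V] [DecidableEq V]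
    (ρ : V → V → ℝ) (m2 : V → ℝ)
    (hsymm : ∀ x y, ρ x y = ρ y x)
    (hρ : ∀ x y, 0 ≤ ρ x y) (hdiag : ∀ x, ρ x x = 0)
    (hm2 : ∀ x, 0 ≤ m2 x)
    (hρsum : ∀ x, Summable (fun z => ρ x z))
    (D : V → ℝ) (hD : ∀ x, D x = (∑' z, ρ x z) + m2 x)
    (c c' δ : ℝ) (hc : 0 < c) (hcc' : c ≤ c') (hδ : δ ∈ Set.Ioo (0 : ℝ) 1)
    (hDb : ∀ x, c ≤ D x ∧ D x ≤ c')
    (hm2δ : ∀ x, δ ≤ m2 x / D x)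
    (P : V → V → ℝ) (hPdef : ∀ x y, P x y = ρ x y / D x)
    (N : ℝ) (hN : 0 < N) (x₀ : V)
    (u f : V → ℝ)
    (hufin : (Function.support u).Finite) (hupos : ∀ x, 0 ≤ u x)
    (huq : ∀ x, u x = 0 ∨ D x ≤ u x)
    (hfb : ∀ x, 0 ≤ f x ∧ f x ≤ D x)
    (heq : ∀ x, (∑' y, (ρ x y / D y) * u y) - u x = f x - N * (if x = x₀ then 1 else 0)) :
    ∀ x, (pot P x₀ x > c' ^ 2 / (c * δ * N) → 0 < u x) ∧
      (pot P x₀ x < c / N → u x = 0) :=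
  stmt10_general ρ m2 hsymm hρ hρsum D hD c c' δ hc hcc' hδ hDb hm2δ P hPdef N hN x₀ u f hufin hupos
    huq hfb heq
end

section
/- Assume the weak regularity assumption: for every δ > 0 and every admissible direction s there exists T > 0 such that dist₁(ts, S) ≤ δt for all t > T. Fix α, β > 0 and let (S_N)_{N≥2} be subsets of ℝ^d with {x ∈ S : f(x) > α/N} ⊆ S_N ⊆ {x ∈ S : f(x) ≥ β/N} for every N. Then for every admissible direction s and every 0 ≤ r ≤ 1/(γ(s)·s), dist₁(rs, (1/log N)·S_N) → 0 as N → ∞. -/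
/-!
Fix an admissible direction `s` with `g = γ(s)·s` and `0 < ρ < 1/g`. Continuity of `c` and `γ` and
the asymptotics of `f` give `f y > exp (-(g + θ)‖y‖)` for large `y` pointing close to `s`.
Regularity provides `y ∈ S` with `‖y - ρ log N • s‖ ≤ δ ρ log N`; for such `y` the bound gives
`f y > α / N` once `(g + θ)(1 + δ)ρ < 1`, so `y ∈ S_N` and `dist (ρ s, S_N / log N) ≤ δ ρ`.
Since `infDist` is 1-Lipschitz, the endpoints `r = 0` and `r = 1/g` follow by density.
-/

open Filter Topology Pointwise

def Admissible {d : ℕ} (S : Set (PiLp 1 (fun _ : Fin d => ℝ)))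
    (s : PiLp 1 (fun _ : Fin d => ℝ)) : Prop :=
  ‖s‖ = 1 ∧ ∃ y : ℕ → PiLp 1 (fun _ : Fin d => ℝ), (∀ n, y n ∈ S) ∧
    Filter.Tendsto (fun n => ‖y n‖) Filter.atTop Filter.atTop ∧
    Filter.Tendsto (fun n => ‖y n‖⁻¹ • y n) Filter.atTop (nhds s)

open Metric Real

theorem Metric.tendsto_infDist_of_mem_closure {X ι : Type*} [PseudoMetricSpace X] {l : Filter ι}
    {A : ι → Set X} {D : Set X} {x : X} (hx : x ∈ closure D)
    (hD : ∀ z ∈ D, Tendsto (fun i => infDist z (A i)) l (𝓝 0)) :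
    Tendsto (fun i => infDist x (A i)) l (𝓝 0) := by
  refine Metric.tendsto_nhds.2 fun ε hε => ?_
  obtain ⟨z, hz, hxz⟩ := Metric.mem_closure_iff.1 hx (ε / 2) (by positivity)
  filter_upwards [Metric.tendsto_nhds.1 (hD z hz) (ε / 2) (by positivity)] with i hi
  rw [Real.dist_eq, sub_zero, abs_of_nonneg infDist_nonneg] at hi ⊢
  linarith [infDist_le_infDist_add_dist (x := x) (y := z) (s := A i)]

section NormedSpace

variable {E : Type*} [NormedAddCommGroup E] [NormedSpace ℝ E]

theorem norm_mul_norm_inv_norm_smul_sub_le {s : E} (hs : ‖s‖ = 1) {t : ℝ} (ht : 0 ≤ t) (y : E) :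
    ‖y‖ * ‖‖y‖⁻¹ • y - s‖ ≤ 2 * ‖y - t • s‖ := by
  rcases eq_or_ne y 0 with rfl | hy
  · simp
  have hy' : 0 < ‖y‖ := norm_pos_iff.2 hy
  have hnorm : |‖y‖ - t| ≤ ‖y - t • s‖ := by
    simpa [norm_smul, hs, abs_of_nonneg ht] using abs_norm_sub_norm_le y (t • s)
  have hsplit : ‖y‖ • (‖y‖⁻¹ • y - s) = (y - t • s) + (t - ‖y‖) • s := by
    rw [smul_sub, smul_smul, mul_inv_cancel₀ hy'.ne', one_smul, sub_smul]
    abel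
  calc ‖y‖ * ‖‖y‖⁻¹ • y - s‖ = ‖(y - t • s) + (t - ‖y‖) • s‖ := by
        rw [← hsplit, norm_smul, Real.norm_of_nonneg hy'.le]
    _ ≤ ‖y - t • s‖ + |t - ‖y‖| := by
        simpa [norm_smul, hs] using norm_add_le (y - t • s) ((t - ‖y‖) • s)
    _ ≤ 2 * ‖y - t • s‖ := by rw [abs_sub_comm]; linarith

def DecayRateLE (f : E → ℝ) (s : E) (g : ℝ) : Prop :=
  ∀ θ > 0, ∃ δ > 0, ∃ R, ∀ y : E, R < ‖y‖ → ‖‖y‖⁻¹ • y - s‖ < δ → exp (-(g + θ) * ‖y‖) < f y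

theorem decayRateLE_of_asymptotic {c φ f : E → ℝ} {s : E}
    (hc : ContinuousWithinAt c {u | ‖u‖ = 1} s) (hφ : ContinuousWithinAt φ {u | ‖u‖ = 1} s)
    (hcs : 0 < c s)
    (hf : ∀ ε > (0 : ℝ), ∃ R, ∀ z : E, R < ‖z‖ →
      |f z * (c (‖z‖⁻¹ • z))⁻¹ * √‖z‖ * exp (‖z‖ * φ (‖z‖⁻¹ • z)) - 1| ≤ ε) :
    DecayRateLE f s (φ s) := by
  intro θ hθ
  obtain ⟨δ₁, hδ₁, hc'⟩ := Metric.continuousWithinAt_iff.1 hc (c s / 2) (by positivity)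
  obtain ⟨δ₂, hδ₂, hφ'⟩ := Metric.continuousWithinAt_iff.1 hφ (θ / 2) (by positivity)
  obtain ⟨R₁, hR₁⟩ := hf (1 / 2) (by norm_num)
  obtain ⟨R₂, hR₂⟩ := eventually_atTop.1 <|
    (tendsto_exp_mul_div_rpow_atTop (1 / 2) (θ / 2) (by positivity)).eventually_gt_atTop (4 / c s)
  refine ⟨min δ₁ δ₂, lt_min hδ₁ hδ₂, max (max R₁ R₂) 0, fun y hy hys => ?_⟩
  simp only [max_lt_iff] at hy
  obtain ⟨⟨hyR₁, hyR₂⟩, hy0⟩ := hy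
  set w := ‖y‖⁻¹ • y
  have hw : w ∈ {u : E | ‖u‖ = 1} := norm_smul_inv_norm (norm_pos_iff.1 hy0)
  have hws : dist w s < min δ₁ δ₂ := by rwa [dist_eq_norm]
  have hcw : c s / 2 < c w := by
    have := hc' hw (hws.trans_le (min_le_left _ _))
    rw [Real.dist_eq] at this
    linarith [(abs_lt.1 this).1]
  have hφw : φ w < φ s + θ / 2 := by
    have := hφ' hw (hws.trans_le (min_le_right _ _))
    rw [Real.dist_eq] at this
    linarith [(abs_lt.1 this).2]
  have hfy : 1 / 2 ≤ f y * (c w)⁻¹ * √‖y‖ * exp (‖y‖ * φ w) := by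
    linarith [(abs_le.1 (hR₁ y hyR₁)).1]
  have hgrowth : 4 / c s < exp (θ / 2 * ‖y‖) / √‖y‖ := by
    rw [Real.sqrt_eq_rpow]; exact hR₂ _ hyR₂.le
  have hsqrt : 0 < √‖y‖ := Real.sqrt_pos.2 hy0
  have hcw0 : 0 < c w := by linarith
  have hlower : c w / 2 / √‖y‖ * exp (-(‖y‖ * φ w)) ≤ f y := by
    calc c w / 2 / √‖y‖ * exp (-(‖y‖ * φ w)) = 1 / 2 * (c w / √‖y‖ * exp (-(‖y‖ * φ w))) := by
          ring
      _ ≤ (f y * (c w)⁻¹ * √‖y‖ * exp (‖y‖ * φ w)) * (c w / √‖y‖ * exp (-(‖y‖ * φ w))) := by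
          gcongr
      _ = f y := by rw [exp_neg]; field_simp
  have hexp : exp (θ / 2 * ‖y‖) * exp (-(φ s + θ) * ‖y‖) = exp (-((φ s + θ / 2) * ‖y‖)) := by
    rw [← exp_add]; ring_nf
  calc exp (-(φ s + θ) * ‖y‖) = 1 * exp (-(φ s + θ) * ‖y‖) := (one_mul _).symm
    _ < c s / 4 * (exp (θ / 2 * ‖y‖) / √‖y‖) * exp (-(φ s + θ) * ‖y‖) := by
        gcongr
        rw [div_lt_iff₀ hcs] at hgrowth
        linarith
    _ = c s / 4 / √‖y‖ * exp (-((φ s + θ / 2) * ‖y‖)) := by rw [← hexp]; ring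
    _ ≤ c w / 2 / √‖y‖ * exp (-(‖y‖ * φ w)) := by
        gcongr ?_ / _ * ?_
        · linarith
        · exact exp_le_exp.2 (by nlinarith)
    _ ≤ f y := hlower

theorem eventually_exists_mem_near_ray {S : Set E} {f : E → ℝ} {s : E} {g ρ δ : ℝ} (α : ℝ)
    (hs : ‖s‖ = 1) (hS : S.Nonempty)
    (hreg : ∀ δ > (0 : ℝ), ∃ T > (0 : ℝ), ∀ t > T, infDist (t • s) S ≤ δ * t)
    (hf : DecayRateLE f s g) (hg : 0 ≤ g) (hρ : 0 < ρ) (hρg : ρ * g < 1) (hδ : 0 < δ) :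
    ∀ᶠ L in atTop, ∃ y ∈ S, ‖y - (ρ * L) • s‖ < δ * (ρ * L) ∧ α * exp (-L) < f y := by
  set θ := (1 - ρ * g) / (4 * ρ)
  have hθ : 0 < θ := div_pos (by linarith) (by positivity)
  set b := ρ * (g + θ)
  have hb : b = ρ * g + (1 - ρ * g) / 4 := by simp only [b, θ]; field_simp
  have hb1 : b < 1 := by rw [hb]; linarith
  obtain ⟨δ₀, hδ₀, R, hR⟩ := hf θ hθ
  set δ₁ := min (min δ (1 / 2)) (min ((1 - b) / 2) (δ₀ / 5))
  have hδ₁ : 0 < δ₁ :=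
    lt_min (lt_min hδ (by norm_num)) (lt_min (by linarith) (by positivity))
  have hδ₁δ : δ₁ ≤ δ := (min_le_left _ _).trans (min_le_left _ _)
  have hδ₁half : δ₁ ≤ 1 / 2 := (min_le_left _ _).trans (min_le_right _ _)
  have hδ₁b : δ₁ ≤ (1 - b) / 2 := (min_le_right _ _).trans (min_le_left _ _)
  have hδ₁δ₀ : δ₁ ≤ δ₀ / 5 := (min_le_right _ _).trans (min_le_right _ _)
  obtain ⟨T, -, hT⟩ := hreg (δ₁ / 2) (by positivity)
  have hκ : 0 < (1 - b) / 2 := by linarith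
  have hρL : Tendsto (fun L => ρ * L) atTop atTop := tendsto_id.const_mul_atTop hρ
  filter_upwards [hρL.eventually_gt_atTop T, hρL.eventually_gt_atTop (2 * R),
    (tendsto_exp_atTop.comp (tendsto_id.const_mul_atTop hκ)).eventually_gt_atTop α,
    eventually_gt_atTop 0] with L hLT hLR hLα hL0
  set t := ρ * L
  have ht : 0 < t := by positivity
  obtain ⟨y, hyS, hyt⟩ : ∃ y ∈ S, ‖y - t • s‖ < δ₁ * t := by
    have hlt : infDist (t • s) S < δ₁ * t := (hT t hLT).trans_lt (by nlinarith)
    obtain ⟨y, hyS, hy⟩ := (infDist_lt_iff hS).1 hlt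
    exact ⟨y, hyS, by rwa [dist_comm, dist_eq_norm] at hy⟩
  have hnorm : |‖y‖ - t| < δ₁ * t := by
    refine lt_of_le_of_lt ?_ hyt
    simpa [norm_smul, hs, abs_of_pos ht] using abs_norm_sub_norm_le y (t • s)
  have hy_lb : t / 2 < ‖y‖ := by nlinarith [(abs_lt.1 hnorm).1]
  have hy_ub : ‖y‖ ≤ (1 + δ₁) * t := by nlinarith [(abs_lt.1 hnorm).2]
  have hdir : ‖‖y‖⁻¹ • y - s‖ < δ₀ := by
    have h := norm_mul_norm_inv_norm_smul_sub_le hs ht.le y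
    by_contra! h'
    nlinarith [mul_le_mul h' hy_lb.le (by positivity) (norm_nonneg _)]
  refine ⟨y, hyS, hyt.trans_le (by gcongr), ?_⟩
  have hexponent : (g + θ) * ‖y‖ ≤ (1 - (1 - b) / 2) * L := by
    calc (g + θ) * ‖y‖ ≤ (g + θ) * ((1 + δ₁) * t) := by gcongr
      _ = b * (1 + δ₁) * L := by ring
      _ ≤ (1 - (1 - b) / 2) * L := by
          gcongr
          nlinarith [mul_le_mul_of_nonneg_right hb1.le hδ₁.le]
  calc α * exp (-L) < exp ((1 - b) / 2 * L) * exp (-L) := by gcongr; exact hLα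
    _ = exp (-((1 - (1 - b) / 2) * L)) := by rw [← exp_add]; ring_nf
    _ ≤ exp (-(g + θ) * ‖y‖) := by rw [exp_le_exp]; linarith
    _ < f y := hR y (by linarith) hdir

theorem tendsto_infDist_smul_inv_log {S : Set E} {SN : ℕ → Set E} {f : E → ℝ} {s : E}
    {g ρ α : ℝ} (hs : ‖s‖ = 1) (hS : S.Nonempty)
    (hreg : ∀ δ > (0 : ℝ), ∃ T > (0 : ℝ), ∀ t > T, infDist (t • s) S ≤ δ * t)
    (hf : DecayRateLE f s g) (hg : 0 ≤ g) (hρ : 0 < ρ) (hρg : ρ * g < 1)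
    (hSN : ∀ N : ℕ, 2 ≤ N → {x ∈ S | f x > α / N} ⊆ SN N) :
    Tendsto (fun N : ℕ => infDist (ρ • s) ((log N)⁻¹ • SN N)) atTop (𝓝 0) := by
  refine Metric.tendsto_nhds.2 fun ε hε => ?_
  have hlog : Tendsto (fun N : ℕ => log N) atTop atTop :=
    tendsto_log_atTop.comp tendsto_natCast_atTop_atTop
  filter_upwards [hlog.eventually
      (eventually_exists_mem_near_ray α hs hS hreg hf hg hρ hρg (div_pos hε hρ)),
    eventually_ge_atTop 2] with N ⟨y, hyS, hyd, hfy⟩ hN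
  have hN0 : (0 : ℝ) < N := by positivity
  have hL : 0 < log N := log_pos (by exact_mod_cast hN)
  have hy : y ∈ SN N := by
    refine hSN N hN ⟨hyS, ?_⟩
    rwa [exp_neg, exp_log hN0, ← div_eq_mul_inv] at hfy
  have hρs : ρ • s = (log N)⁻¹ • ((ρ * log N) • s) := by
    rw [smul_smul]; congr 1; field_simp
  rw [Real.dist_eq, sub_zero, abs_of_nonneg infDist_nonneg, hρs, infDist_smul₀ (inv_ne_zero hL.ne'),
    norm_inv, Real.norm_of_nonneg hL.le, inv_mul_lt_iff₀ hL]
  calc infDist ((ρ * log N) • s) (SN N) ≤ ‖y - (ρ * log N) • s‖ := by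
        rw [← dist_eq_norm, dist_comm]; exact infDist_le_dist_of_mem hy
    _ < ε / ρ * (ρ * log N) := hyd
    _ = log N * ε := by field_simp

end NormedSpace

section Dotp

variable {d : ℕ}

theorem dotp_eq_norm_mul_dotp (z v : PiLp 1 (fun _ : Fin d => ℝ)) :
    dotp z v = ‖z‖ * dotp v (‖z‖⁻¹ • z) := by
  rcases eq_or_ne z 0 with rfl | hz
  · simp [dotp]
  simp only [dotp, PiLp.smul_apply, smul_eq_mul, Finset.mul_sum]
  refine Finset.sum_congr rfl fun j _ => ?_
  field_simp [norm_ne_zero_iff.2 hz]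

theorem continuous_dotp :
    Continuous (fun p : PiLp 1 (fun _ : Fin d => ℝ) × PiLp 1 (fun _ : Fin d => ℝ) =>
      dotp p.1 p.2) := by
  unfold dotp; fun_prop

end Dotp

theorem stmt15_general {d : ℕ}
    (c : PiLp 1 (fun _ : Fin d => ℝ) → ℝ)
    (γ : PiLp 1 (fun _ : Fin d => ℝ) → PiLp 1 (fun _ : Fin d => ℝ))
    (hc : ContinuousOn c {s : PiLp 1 (fun _ : Fin d => ℝ) | ‖s‖ = 1})
    (hγ : ContinuousOn γ {s : PiLp 1 (fun _ : Fin d => ℝ) | ‖s‖ = 1})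
    (hcpos : ∀ s : PiLp 1 (fun _ : Fin d => ℝ), ‖s‖ = 1 → 0 < c s)
    (hγpos : ∀ s : PiLp 1 (fun _ : Fin d => ℝ), ‖s‖ = 1 → 0 < dotp (γ s) s)
    (f : PiLp 1 (fun _ : Fin d => ℝ) → ℝ)
    (hf : ∀ ε > (0 : ℝ), ∃ R > (0 : ℝ), ∀ z : PiLp 1 (fun _ : Fin d => ℝ), ‖z‖ > R →
      |f z * (c (‖z‖⁻¹ • z))⁻¹ * Real.sqrt ‖z‖ *
        Real.exp (dotp z (γ (‖z‖⁻¹ • z))) - 1| ≤ ε)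
    (S : Set (PiLp 1 (fun _ : Fin d => ℝ)))
    (hreg : ∀ δ > (0 : ℝ), ∀ s, Admissible S s → ∃ T > (0 : ℝ), ∀ t > T,
      Metric.infDist (t • s) S ≤ δ * t)
    (α β : ℝ)
    (SN : ℕ → Set (PiLp 1 (fun _ : Fin d => ℝ)))
    (hSN : ∀ N : ℕ, 2 ≤ N →
      {x ∈ S | f x > α / N} ⊆ SN N ∧ SN N ⊆ {x ∈ S | f x ≥ β / N}) :
    ∀ s, Admissible S s → ∀ r : ℝ, 0 ≤ r → r ≤ 1 / dotp (γ s) s →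
      Tendsto (fun N : ℕ => Metric.infDist (r • s) ((Real.log N)⁻¹ • SN N))
        atTop (nhds 0) := by
  intro s hs r hr0 hr1
  have hs1 : ‖s‖ = 1 := hs.1
  have hS : S.Nonempty := by
    obtain ⟨y, hyS, -⟩ := hs.2
    exact ⟨y 0, hyS 0⟩
  have hg := hγpos s hs1
  have hdecay : DecayRateLE f s (dotp (γ s) s) := by
    refine decayRateLE_of_asymptotic (φ := fun u => dotp (γ u) u) (hc.continuousWithinAt hs1)
      ((continuous_dotp.comp_continuousOn (hγ.prodMk continuousOn_id)).continuousWithinAt hs1)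
      (hcpos s hs1) fun ε hε => ?_
    obtain ⟨R, -, hR⟩ := hf ε hε
    exact ⟨R, fun z hz => by simpa only [dotp_eq_norm_mul_dotp z] using hR z hz⟩
  have hr : r • s ∈ closure ((· • s) '' Set.Ioo 0 (1 / dotp (γ s) s)) :=
    map_mem_closure (f := (· • s)) (continuous_id.smul continuous_const)
      (show r ∈ closure (Set.Ioo 0 (1 / dotp (γ s) s)) by
        rw [closure_Ioo (by positivity)]; exact ⟨hr0, hr1⟩) (Set.mapsTo_image _ _)
  refine tendsto_infDist_of_mem_closure hr ?_
  rintro _ ⟨ρ, ⟨hρ0, hρ1⟩, rfl⟩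
  exact tendsto_infDist_smul_inv_log hs1 hS (fun δ hδ => hreg δ hδ s hs)
    hdecay hg.le hρ0 ((lt_div_iff₀ hg).1 hρ1) fun N hN => (hSN N hN).1

/-- Under the weak regularity assumption, for every admissible direction `s` and every
`0 ≤ r ≤ 1/(γ(s)·s)`, the `ℓ¹` distance from `rs` to the rescaled sandpile
`(1/log N)·S_N` tends to `0`. -/
theorem stmt15 {d : ℕ} (hd : 1 ≤ d)
    (c : PiLp 1 (fun _ : Fin d => ℝ) → ℝ)
    (γ : PiLp 1 (fun _ : Fin d => ℝ) → PiLp 1 (fun _ : Fin d => ℝ))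
    (hc : ContinuousOn c {s : PiLp 1 (fun _ : Fin d => ℝ) | ‖s‖ = 1})
    (hγ : ContinuousOn γ {s : PiLp 1 (fun _ : Fin d => ℝ) | ‖s‖ = 1})
    (hcpos : ∀ s : PiLp 1 (fun _ : Fin d => ℝ), ‖s‖ = 1 → 0 < c s)
    (hγpos : ∀ s : PiLp 1 (fun _ : Fin d => ℝ), ‖s‖ = 1 → 0 < dotp (γ s) s)
    (f : PiLp 1 (fun _ : Fin d => ℝ) → ℝ)
    (hf : ∀ ε > (0 : ℝ), ∃ R > (0 : ℝ), ∀ z : PiLp 1 (fun _ : Fin d => ℝ), ‖z‖ > R →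
      |f z * (c (‖z‖⁻¹ • z))⁻¹ * Real.sqrt ‖z‖ *
        Real.exp (dotp z (γ (‖z‖⁻¹ • z))) - 1| ≤ ε)
    (S : Set (PiLp 1 (fun _ : Fin d => ℝ)))
    (hreg : ∀ δ > (0 : ℝ), ∀ s, Admissible S s → ∃ T > (0 : ℝ), ∀ t > T,
      Metric.infDist (t • s) S ≤ δ * t)
    (α β : ℝ) (hα : 0 < α) (hβ : 0 < β)
    (SN : ℕ → Set (PiLp 1 (fun _ : Fin d => ℝ)))
    (hSN : ∀ N : ℕ, 2 ≤ N →
      {x ∈ S | f x > α / N} ⊆ SN N ∧ SN N ⊆ {x ∈ S | f x ≥ β / N}) :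
    ∀ s, Admissible S s → ∀ r : ℝ, 0 ≤ r → r ≤ 1 / dotp (γ s) s →
      Tendsto (fun N : ℕ => Metric.infDist (r • s) ((Real.log N)⁻¹ • SN N))
        atTop (nhds 0) :=
  stmt15_general c γ hc hγ hcpos hγpos f hf S hreg α β SN hSN
end
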